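/- Let T, D ∈ ℕ and ℓ ∈ ℕ ∪ {0}. For every pair of node-neighboring insertion-only graph streams S, S' of length T and every time step t ∈ [T] such that both S and S' are (D,ℓ)-bounded through time t, the node distance between the DLL-projected streams satisfies d_node(Π^DLL_D(S)_[t], Π^DLL_D(S')_[t]) ≤ 2ℓ + 1. -/

import Mathlib

open Finset

/-- A finite graph: a finite vertex set together with a finite set of undirected edges. -/
structure FinGraph where
  verts : Finset ℕ
  edges : Finset (Sym2 ℕ)

namespace FinGraph

/-- A finite graph is valid if every edge is a non-loop both of whose endpoints are vertices. -/
def Valid (G : FinGraph) : Prop :=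
  ∀ e ∈ G.edges, ¬ e.IsDiag ∧ ∀ v ∈ e, v ∈ G.verts

/-- The degree of a vertex: the number of edges containing it. -/
def degree (G : FinGraph) (v : ℕ) : ℕ :=
  (G.edges.filter (fun e => v ∈ e)).card

/-- Remove a node and all of its adjacent edges. -/
def removeNode (G : FinGraph) (v : ℕ) : FinGraph :=
  ⟨G.verts.erase v, G.edges.filter (fun e => v ∉ e)⟩

/-- Remove a single edge. -/
def removeEdge (G : FinGraph) (e : Sym2 ℕ) : FinGraph :=
  ⟨G.verts, G.edges.erase e⟩

/-- `G` is `(D, ℓ)`-bounded: it has at most `ℓ` nodes of degree greater than `D`. -/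
def DLBounded (G : FinGraph) (D ℓ : ℕ) : Prop :=
  (G.verts.filter (fun v => D < G.degree v)).card ≤ ℓ

end FinGraph

/-- One graph is obtained from the other by removing one node and all of its adjacent edges. -/
def nodeNeighborGraph (G G' : FinGraph) : Prop :=
  (∃ v ∈ G.verts, G' = G.removeNode v) ∨ (∃ v ∈ G'.verts, G = G'.removeNode v)

/-- `G'` is obtained from `G` by removing a single edge, an isolated node,
or a degree-one node together with its adjacent edge. -/
def edgeRemovalGraph (G G' : FinGraph) : Prop :=
  (∃ e ∈ G.edges, G' = G.removeEdge e) ∨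
  (∃ v ∈ G.verts, G.degree v = 0 ∧ G' = FinGraph.mk (G.verts.erase v) G.edges) ∨
  (∃ v ∈ G.verts, G.degree v = 1 ∧ G' = G.removeNode v)

/-- Edge-neighboring graphs. -/
def edgeNeighborGraph (G G' : FinGraph) : Prop :=
  edgeRemovalGraph G G' ∨ edgeRemovalGraph G' G

/-- The length of a shortest chain of valid graphs from `A` to `B` in which
consecutive graphs are related by `R`. -/
noncomputable def graphChainDist (R : FinGraph → FinGraph → Prop) (A B : FinGraph) : ℕ :=
  sInf {n | ∃ f : ℕ → FinGraph, f 0 = A ∧ f n = B ∧ (∀ i ≤ n, (f i).Valid) ∧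
    ∀ i < n, R (f i) (f (i + 1))}

/-- Node distance between finite graphs. -/
noncomputable def graphNodeDist : FinGraph → FinGraph → ℕ := graphChainDist nodeNeighborGraph

/-- Edge distance between finite graphs. -/
noncomputable def graphEdgeDist : FinGraph → FinGraph → ℕ := graphChainDist edgeNeighborGraph

/-- An insertion-only graph stream: the nodes and edges arriving at each time step. -/
structure GraphStream where
  nodes : ℕ → Finset ℕ
  edges : ℕ → Finset (Sym2 ℕ)

namespace GraphStream

/-- Validity of a graph stream of length `T`: arrivals happen only at times `1, …, T`,
no node or edge arrives twice, and every edge is a non-loop whose endpoints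
arrive at or before the edge does. -/
def Valid (T : ℕ) (S : GraphStream) : Prop :=
  (∀ t, ((S.nodes t).Nonempty ∨ (S.edges t).Nonempty) → 1 ≤ t ∧ t ≤ T) ∧
  (∀ s t, s ≠ t → Disjoint (S.nodes s) (S.nodes t)) ∧
  (∀ s t, s ≠ t → Disjoint (S.edges s) (S.edges t)) ∧
  (∀ t, ∀ e ∈ S.edges t, ¬ e.IsDiag ∧ ∀ v ∈ e, ∃ s ≤ t, v ∈ S.nodes s)

/-- The flattened graph of the stream through time `t`. -/
def flat (S : GraphStream) (t : ℕ) : FinGraph :=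
  ⟨(Finset.range (t + 1)).biUnion S.nodes, (Finset.range (t + 1)).biUnion S.edges⟩

/-- Remove a node and all of its adjacent edges from a stream. -/
def removeNode (S : GraphStream) (v : ℕ) : GraphStream :=
  ⟨fun t => (S.nodes t).erase v, fun t => (S.edges t).filter (fun e => v ∉ e)⟩

/-- Remove a single edge from a stream. -/
def removeEdge (S : GraphStream) (e : Sym2 ℕ) : GraphStream :=
  ⟨S.nodes, fun t => (S.edges t).erase e⟩

/-- Truncation of a stream: keep only arrivals at times `≤ t`. -/
def trunc (S : GraphStream) (t : ℕ) : GraphStream :=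
  ⟨fun s => if s ≤ t then S.nodes s else ∅, fun s => if s ≤ t then S.edges s else ∅⟩

/-- `v` arrives at some point in the stream. -/
def hasNode (S : GraphStream) (v : ℕ) : Prop :=
  ∃ t, v ∈ S.nodes t

/-- The stream is `(D, ℓ)`-bounded through time `t`. -/
def DLBoundedThrough (S : GraphStream) (D ℓ t : ℕ) : Prop :=
  (S.flat t).DLBounded D ℓ

end GraphStream

/-- `S'` is obtained from `S` by removing one node and all of its adjacent edges
(which may arrive at many time steps). -/
def nodeRemovalStream (S S' : GraphStream) : Prop :=
  ∃ v, S.hasNode v ∧ S' = S.removeNode v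

/-- Node-neighboring streams. -/
def nodeNeighborStream (S S' : GraphStream) : Prop :=
  nodeRemovalStream S S' ∨ nodeRemovalStream S' S

/-- `S'` is obtained from the length-`T` stream `S` by removing a single edge,
an isolated node, or a degree-one node together with its adjacent edge. -/
def edgeRemovalStream (T : ℕ) (S S' : GraphStream) : Prop :=
  (∃ t, ∃ e ∈ S.edges t, S' = S.removeEdge e) ∨
  (∃ v, S.hasNode v ∧ (S.flat T).degree v ≤ 1 ∧ S' = S.removeNode v)

/-- Edge-neighboring streams (of length `T`). -/
def edgeNeighborStream (T : ℕ) (S S' : GraphStream) : Prop :=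
  edgeRemovalStream T S S' ∨ edgeRemovalStream T S' S

/-- Length of a shortest chain of valid streams of length `T` in which consecutive
streams are related by `R`. -/
noncomputable def streamChainDist (T : ℕ) (R : GraphStream → GraphStream → Prop)
    (A B : GraphStream) : ℕ :=
  sInf {n | ∃ f : ℕ → GraphStream, f 0 = A ∧ f n = B ∧ (∀ i ≤ n, (f i).Valid T) ∧
    ∀ i < n, R (f i) (f (i + 1))}

/-- Node distance between streams of length `T`. -/
noncomputable def streamNodeDist (T : ℕ) : GraphStream → GraphStream → ℕ :=
  streamChainDist T nodeNeighborStream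

/-- Edge distance between streams of length `T`. -/
noncomputable def streamEdgeDist (T : ℕ) : GraphStream → GraphStream → ℕ :=
  streamChainDist T (edgeNeighborStream T)

/-- A fixed injective key on undirected edges, providing the consistent total order in
which edges arriving at the same time step are processed. -/
def edgeKey : Sym2 ℕ → ℕ :=
  Sym2.lift ⟨fun a b => Nat.pair (min a b) (max a b), fun a b => by
    dsimp only; rw [inf_comm, sup_comm]⟩

/-- The two endpoints of an edge, as an ordered pair. -/
def endpointsOf (e : Sym2 ℕ) : ℕ × ℕ := (edgeKey e).unpair

/-- The edges of a finite edge set, listed in increasing `edgeKey` order. -/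
def sortEdges (E : Finset (Sym2 ℕ)) : List (Sym2 ℕ) :=
  ((E.image edgeKey).sort (· ≤ ·)).map fun k => s(k.unpair.1, k.unpair.2)

/-- All edges of a stream of length `T`, tagged with their arrival times, in processing
order: lexicographically by (arrival time, consistent edge order). -/
def GraphStream.procList (S : GraphStream) (T : ℕ) : List (ℕ × Sym2 ℕ) :=
  (List.range (T + 1)).flatMap fun t => (sortEdges (S.edges t)).map fun e => (t, e)

/-- One step of the greedy projection with degree bound `D`.  The state consists of the
degree counters together with the edges kept so far (indexed by arrival time).
If `bbds = true` the counters of the endpoints are incremented for every processed edge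
(the BBDS rule); if `bbds = false` they are incremented only when the edge is kept
(the DLL rule). -/
def projStep (D : ℕ) (bbds : Bool) (st : (ℕ → ℕ) × (ℕ → Finset (Sym2 ℕ)))
    (p : ℕ × Sym2 ℕ) : (ℕ → ℕ) × (ℕ → Finset (Sym2 ℕ)) :=
  let d := st.1
  let u := (endpointsOf p.2).1
  let v := (endpointsOf p.2).2
  let keep : Bool := decide (d u < D ∧ d v < D)
  ((if bbds || keep then fun w => if w = u ∨ w = v then d w + 1 else d w else d),
   (if keep then fun s => if s = p.1 then insert p.2 (st.2 s) else st.2 s else st.2))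

/-- The time-aware projection with degree bound `D` on streams of length `T`:
the BBDS projection if `bbds = true` and the DLL projection if `bbds = false`.
All arriving nodes are kept; an arriving edge is kept (at its arrival time) iff both of
its endpoints have counter value `< D` when the edge is processed. -/
def project (bbds : Bool) (D T : ℕ) (S : GraphStream) : GraphStream :=
  ⟨S.nodes,
   ((S.procList T).foldl (projStep D bbds)
      ((fun _ => 0 : ℕ → ℕ), (fun _ => ∅ : ℕ → Finset (Sym2 ℕ)))).2⟩

/-- The BBDS projection `Π^BBDS_D` on streams of length `T`. -/
def projBBDS (D T : ℕ) : GraphStream → GraphStream := project true D T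

/-- The DLL projection `Π^DLL_D` on streams of length `T`. -/
def projDLL (D T : ℕ) : GraphStream → GraphStream := project false D T

/-!
By symmetry of the node distance we may assume `S' = S - v`. Let `H` be the at most `ℓ`
nodes of degree `> D` in `flat(S_[t])` and put `W = H ∪ {v}`. An edge of `S_[t]` with no
endpoint in `W` has endpoints of degree `≤ D`, in `S` and in `S - v` alike, and the DLL
projection always keeps such an edge: when it is processed, the counter of an endpoint only
counts earlier kept edges at that endpoint, which are fewer than its degree. So deleting `W`
from `Π(S)_[t]` and `W \ {v}` from `Π(S - v)_[t]` leaves the same stream, and the two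
projected streams are at most `|W| + |W \ {v}| ≤ 2ℓ + 1` node removals and insertions apart.
-/

theorem mk_unpair_edgeKey (e : Sym2 ℕ) : s((edgeKey e).unpair.1, (edgeKey e).unpair.2) = e := by
  induction e using Sym2.ind with
  | _ a b =>
    change s((Nat.pair (min a b) (max a b)).unpair.1, (Nat.pair (min a b) (max a b)).unpair.2) = _
    rw [Nat.unpair_pair]
    rcases le_total a b with hab | hab
    · simp [hab]
    · simp [hab, Sym2.eq_swap]

theorem endpointsOf_fst_mem (e : Sym2 ℕ) : (endpointsOf e).1 ∈ e := by
  have h := Sym2.mem_mk_left (edgeKey e).unpair.1 (edgeKey e).unpair.2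
  rwa [mk_unpair_edgeKey] at h

theorem endpointsOf_snd_mem (e : Sym2 ℕ) : (endpointsOf e).2 ∈ e := by
  have h := Sym2.mem_mk_right (edgeKey e).unpair.1 (edgeKey e).unpair.2
  rwa [mk_unpair_edgeKey] at h

theorem mem_sortEdges {E : Finset (Sym2 ℕ)} {e : Sym2 ℕ} : e ∈ sortEdges E ↔ e ∈ E := by
  simp only [sortEdges, List.mem_map, Finset.mem_sort, Finset.mem_image]
  constructor
  · rintro ⟨_, ⟨e', he', rfl⟩, rfl⟩
    rwa [mk_unpair_edgeKey]
  · exact fun he => ⟨edgeKey e, ⟨e, he, rfl⟩, mk_unpair_edgeKey e⟩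

theorem sortEdges_nodup (E : Finset (Sym2 ℕ)) : (sortEdges E).Nodup := by
  refine (Finset.sort_nodup _ _).map_on ?_
  simp only [Finset.mem_sort, Finset.mem_image]
  rintro _ ⟨e₁, -, rfl⟩ _ ⟨e₂, -, rfl⟩ h
  simpa only [mk_unpair_edgeKey] using congrArg edgeKey h

attribute [ext] GraphStream FinGraph

namespace FinGraph

theorem degree_removeNode_le (G : FinGraph) (v u : ℕ) :
    (G.removeNode v).degree u ≤ G.degree u :=
  card_le_card (filter_subset_filter _ (filter_subset _ _))

theorem countP_mem_lt_degree {G : FinGraph} {L : List (Sym2 ℕ)} (hL : L.Nodup)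
    (hLG : ∀ x ∈ L, x ∈ G.edges) {e : Sym2 ℕ} (he : e ∈ G.edges) (heL : e ∉ L) {u : ℕ}
    (hu : u ∈ e) : L.countP (fun x => u ∈ x) < G.degree u := by
  rw [List.countP_eq_length_filter, ← List.toFinset_card_of_nodup (hL.filter _)]
  refine card_lt_card ((ssubset_iff_of_subset ?_).2 ⟨e, mem_filter.2 ⟨he, hu⟩, by simp [heL]⟩)
  intro x hx
  simp only [List.mem_toFinset, List.mem_filter, decide_eq_true_eq] at hx
  exact mem_filter.2 ⟨hLG x hx.1, hx.2⟩

end FinGraph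

namespace GraphStream

variable {S : GraphStream} {T : ℕ}

theorem mem_procList {p : ℕ × Sym2 ℕ} : p ∈ S.procList T ↔ p.1 ≤ T ∧ p.2 ∈ S.edges p.1 := by
  obtain ⟨s, e⟩ := p
  simp [procList, mem_sortEdges, and_comm]

theorem Valid.pairwise_procList (hS : S.Valid T) :
    (S.procList T).Pairwise (fun p q => p.1 ≤ q.1 ∧ p.2 ≠ q.2) := by
  refine List.pairwise_flatMap.2 ⟨fun s _ => ?_, List.pairwise_lt_range.imp ?_⟩
  · exact List.pairwise_map.2 ((sortEdges_nodup _).imp fun h => ⟨le_rfl, h⟩)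
  · intro s s' hss' x hx y hy
    simp only [List.mem_map, mem_sortEdges] at hx hy
    obtain ⟨e, he, rfl⟩ := hx
    obtain ⟨e', he', rfl⟩ := hy
    exact ⟨hss'.le, fun hee' : e = e' =>
      disjoint_left.1 (hS.2.2.1 s s' hss'.ne) he (hee' ▸ he')⟩

theorem mem_flat_verts {t u : ℕ} : u ∈ (S.flat t).verts ↔ ∃ s ≤ t, u ∈ S.nodes s := by
  simp [flat]

theorem mem_flat_edges {t : ℕ} {e : Sym2 ℕ} : e ∈ (S.flat t).edges ↔ ∃ s ≤ t, e ∈ S.edges s := by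
  simp [flat]

theorem Valid.mem_flat_verts_of_mem_edges (hS : S.Valid T) {t s u : ℕ} {e : Sym2 ℕ}
    (hst : s ≤ t) (he : e ∈ S.edges s) (hu : u ∈ e) : u ∈ (S.flat t).verts := by
  obtain ⟨s', hs', hu'⟩ := (hS.2.2.2 s e he).2 u hu
  exact mem_flat_verts.2 ⟨s', hs'.trans hst, hu'⟩

def removeNodes (S : GraphStream) (W : Finset ℕ) : GraphStream :=
  ⟨fun t => S.nodes t \ W, fun t => (S.edges t).filter fun e => ∀ w ∈ W, w ∉ e⟩

theorem removeNodes_empty (S : GraphStream) : S.removeNodes ∅ = S := by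
  ext <;> simp [removeNodes]

theorem removeNodes_insert (S : GraphStream) (a : ℕ) (W : Finset ℕ) :
    S.removeNodes (insert a W) = (S.removeNodes W).removeNode a := by
  ext <;> simp [removeNodes, removeNode] <;> tauto

theorem removeNodes_singleton (S : GraphStream) (v : ℕ) : S.removeNodes {v} = S.removeNode v := by
  rw [← insert_empty_eq, removeNodes_insert, removeNodes_empty]

theorem flat_removeNode (S : GraphStream) (v t : ℕ) :
    (S.removeNode v).flat t = (S.flat t).removeNode v := by
  ext <;> simp [flat, removeNode, FinGraph.removeNode] <;> tauto

theorem Valid.removeNodes (hS : S.Valid T) (W : Finset ℕ) : (S.removeNodes W).Valid T := by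
  obtain ⟨harr, hnodes, hedges, hends⟩ := hS
  refine ⟨fun s hs => harr s ?_, fun s s' h => ?_, fun s s' h => ?_, fun s e he => ?_⟩
  · exact hs.imp (Nonempty.mono sdiff_subset) (Nonempty.mono (filter_subset _ _))
  · exact (hnodes s s' h).mono sdiff_subset sdiff_subset
  · exact (hedges s s' h).mono (filter_subset _ _) (filter_subset _ _)
  · simp only [GraphStream.removeNodes, mem_filter] at he
    refine ⟨(hends s e he.1).1, fun u hu => ?_⟩
    obtain ⟨s', hs', hu'⟩ := (hends s e he.1).2 u hu
    exact ⟨s', hs', mem_sdiff.2 ⟨hu', fun huW => he.2 u huW hu⟩⟩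

theorem Valid.removeNode (hS : S.Valid T) (v : ℕ) : (S.removeNode v).Valid T :=
  removeNodes_singleton S v ▸ hS.removeNodes {v}

theorem Valid.trunc (hS : S.Valid T) (t : ℕ) : (S.trunc t).Valid t := by
  obtain ⟨harr, hnodes, hedges, hends⟩ := hS
  refine ⟨fun s hs => ?_, fun s s' h => ?_, fun s s' h => ?_, fun s e he => ?_⟩
  · simp only [GraphStream.trunc] at hs
    split_ifs at hs with hst
    · exact ⟨(harr s hs).1, hst⟩
    · simp at hs
  · simp only [GraphStream.trunc]
    split_ifs <;> simp [hnodes s s' h]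
  · simp only [GraphStream.trunc]
    split_ifs <;> simp [hedges s s' h]
  · simp only [GraphStream.trunc] at he ⊢
    split_ifs at he with hst
    · refine ⟨(hends s e he).1, fun u hu => ?_⟩
      obtain ⟨s', hs', hu'⟩ := (hends s e he).2 u hu
      exact ⟨s', hs', by simpa [hs'.trans hst] using hu'⟩
    · simp at he

end GraphStream

section Projection

variable {D : ℕ} {b : Bool} {st : (ℕ → ℕ) × (ℕ → Finset (Sym2 ℕ))} {p : ℕ × Sym2 ℕ} {s : ℕ}

theorem mem_projStep_edges_iff {e : Sym2 ℕ} :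
    e ∈ (projStep D b st p).2 s ↔ e ∈ st.2 s ∨
      (s = p.1 ∧ e = p.2 ∧ st.1 (endpointsOf p.2).1 < D ∧ st.1 (endpointsOf p.2).2 < D) := by
  simp only [projStep]
  split_ifs <;> grind

theorem mem_projStep_edges {e : Sym2 ℕ} (he : ∀ u ∈ e, st.1 u < D) :
    e ∈ (projStep D b st (s, e)).2 s :=
  mem_projStep_edges_iff.2 <|
    Or.inr ⟨rfl, rfl, he _ (endpointsOf_fst_mem e), he _ (endpointsOf_snd_mem e)⟩

theorem subset_projStep_edges : st.2 s ⊆ (projStep D b st p).2 s :=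
  fun _ he => mem_projStep_edges_iff.2 (Or.inl he)

theorem subset_foldl_projStep_edges (l : List (ℕ × Sym2 ℕ)) :
    st.2 s ⊆ (l.foldl (projStep D b) st).2 s := by
  induction l generalizing st with
  | nil => exact subset_rfl
  | cons p l ih => exact subset_projStep_edges.trans ih

theorem foldl_projStep_edges_subset {E : ℕ → Finset (Sym2 ℕ)} {l : List (ℕ × Sym2 ℕ)}
    (hl : ∀ p ∈ l, p.2 ∈ E p.1) (hst : ∀ s, st.2 s ⊆ E s) :
    (l.foldl (projStep D b) st).2 s ⊆ E s := by
  induction l generalizing st with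
  | nil => exact hst s
  | cons p l ih =>
    refine ih (fun q hq => hl q (List.mem_cons_of_mem _ hq)) fun s' e he => ?_
    rcases mem_projStep_edges_iff.1 he with he | ⟨rfl, rfl, -⟩
    exacts [hst s' he, hl p List.mem_cons_self]

theorem projStep_false_counter_le (u : ℕ) :
    (projStep D false st p).1 u ≤ st.1 u + if u ∈ p.2 then 1 else 0 := by
  have h₁ := endpointsOf_fst_mem p.2
  have h₂ := endpointsOf_snd_mem p.2
  simp only [projStep, Bool.false_or]
  split_ifs <;> grind

theorem foldl_projStep_false_counter_le (u : ℕ) (l : List (ℕ × Sym2 ℕ)) :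
    (l.foldl (projStep D false) st).1 u ≤ st.1 u + (l.map Prod.snd).countP (fun e => u ∈ e) := by
  induction l generalizing st with
  | nil => simp
  | cons p l ih =>
    have := projStep_false_counter_le (D := D) (st := st) (p := p) u
    simp only [List.foldl_cons, List.map_cons, List.countP_cons, decide_eq_true_eq]
    grind

end Projection

namespace GraphStream

variable {S : GraphStream} {b : Bool} {D T : ℕ}

theorem project_edges_subset {s : ℕ} : (project b D T S).edges s ⊆ S.edges s :=
  foldl_projStep_edges_subset (fun _ hp => (mem_procList.1 hp).2) fun _ => empty_subset _

theorem Valid.project (hS : S.Valid T) (b : Bool) (D : ℕ) : (project b D T S).Valid T := by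
  obtain ⟨harr, hnodes, hedges, hends⟩ := hS
  have hsub : ∀ s, (_root_.project b D T S).edges s ⊆ S.edges s := fun _ => project_edges_subset
  refine ⟨fun s hs => harr s ?_, hnodes, fun s s' h => ?_, fun s e he => hends s e (hsub s he)⟩
  · exact hs.imp id (Nonempty.mono (hsub s))
  · exact (hedges s s' h).mono (hsub s) (hsub s')

theorem hasNode_trunc_project {t u : ℕ} :
    ((project b D T S).trunc t).hasNode u ↔ u ∈ (S.flat t).verts := by
  simp only [hasNode, GraphStream.trunc, _root_.project, mem_flat_verts]
  grind

end GraphStream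

theorem mem_projDLL_edges_of_degree_le {S : GraphStream} {T D t s : ℕ} {e : Sym2 ℕ}
    (hS : S.Valid T) (hst : s ≤ t) (htT : t ≤ T) (he : e ∈ S.edges s)
    (hdeg : ∀ u ∈ e, (S.flat t).degree u ≤ D) : e ∈ (projDLL D T S).edges s := by
  obtain ⟨l₁, l₂, hsplit⟩ :=
    List.append_of_mem (GraphStream.mem_procList (p := (s, e)) |>.2 ⟨hst.trans htT, he⟩)
  have hpw := hS.pairwise_procList
  rw [hsplit, List.pairwise_append] at hpw
  have hbefore : ∀ p ∈ l₁, p.1 ≤ s ∧ p.2 ≠ e := fun p hp => hpw.2.2 p hp _ List.mem_cons_self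
  set st := l₁.foldl (projStep D false) (fun _ => 0, fun _ => ∅)
  have hcounter : ∀ u ∈ e, st.1 u < D := by
    intro u hu
    calc st.1 u ≤ (l₁.map Prod.snd).countP (fun x => u ∈ x) := by
          simpa using foldl_projStep_false_counter_le (st := (fun _ => 0, fun _ => ∅)) u l₁
      _ < (S.flat t).degree u := by
          refine FinGraph.countP_mem_lt_degree (List.pairwise_map.2 (hpw.1.imp And.right)) ?_
            (GraphStream.mem_flat_edges.2 ⟨s, hst, he⟩) ?_ hu
          · simp only [List.mem_map]
            rintro _ ⟨p, hp, rfl⟩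
            have hpS : p ∈ S.procList T := hsplit ▸ List.mem_append_left _ hp
            exact GraphStream.mem_flat_edges.2
              ⟨p.1, (hbefore p hp).1.trans hst, (GraphStream.mem_procList.1 hpS).2⟩
          · simp only [List.mem_map, not_exists, not_and]
            exact fun p hp => (hbefore p hp).2
      _ ≤ D := hdeg u hu
  change e ∈ ((S.procList T).foldl (projStep D false) _).2 s
  rw [hsplit, List.foldl_append, List.foldl_cons]
  exact subset_foldl_projStep_edges l₂ (mem_projStep_edges hcounter)

section Chains

variable {t : ℕ} {R : GraphStream → GraphStream → Prop} {A B C : GraphStream} {m n : ℕ}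

def chainLengths (t : ℕ) (R : GraphStream → GraphStream → Prop) (A B : GraphStream) : Set ℕ :=
  {n | ∃ f : ℕ → GraphStream, f 0 = A ∧ f n = B ∧ (∀ i ≤ n, (f i).Valid t) ∧
    ∀ i < n, R (f i) (f (i + 1))}

theorem streamChainDist_le_of_mem (h : n ∈ chainLengths t R A B) :
    streamChainDist t R A B ≤ n :=
  Nat.sInf_le h

theorem zero_mem_chainLengths (hA : A.Valid t) : 0 ∈ chainLengths t R A A :=
  ⟨fun _ => A, rfl, rfl, fun _ _ => hA, fun _ h => absurd h (Nat.not_lt_zero _)⟩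

theorem one_mem_chainLengths (hA : A.Valid t) (hB : B.Valid t) (h : R A B) :
    1 ∈ chainLengths t R A B := by
  refine ⟨fun i => if i = 0 then A else B, rfl, rfl, fun i _ => ?_, fun i hi => ?_⟩
  · dsimp only
    split_ifs
    exacts [hA, hB]
  · obtain rfl : i = 0 := by omega
    simpa using h

theorem add_mem_chainLengths (h₁ : m ∈ chainLengths t R A B) (h₂ : n ∈ chainLengths t R B C) :
    m + n ∈ chainLengths t R A C := by
  obtain ⟨f, hf0, hfm, hfv, hfR⟩ := h₁
  obtain ⟨g, hg0, hgn, hgv, hgR⟩ := h₂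
  set k : ℕ → GraphStream := fun i => if i < m then f i else g (i - m)
  have hkf : ∀ i ≤ m, k i = f i := by
    intro i hi
    rcases hi.lt_or_eq with hi | rfl
    · simp [k, hi]
    · simp [k, hfm, hg0]
  have hkg : ∀ i, k (m + i) = g i := fun i => by simp [k]
  refine ⟨k, (hkf 0 m.zero_le).trans hf0, (hkg n).trans hgn, fun i hi => ?_, fun i hi => ?_⟩
  · rcases le_or_gt i m with him | him
    · exact hkf i him ▸ hfv i him
    · obtain ⟨j, rfl⟩ := Nat.exists_eq_add_of_le him.le
      exact hkg j ▸ hgv j (by omega)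
  · rcases lt_or_ge i m with him | him
    · rw [hkf i him.le, hkf (i + 1) him]
      exact hfR i him
    · obtain ⟨j, rfl⟩ := Nat.exists_eq_add_of_le him
      rw [hkg j, add_assoc, hkg (j + 1)]
      exact hgR j (by omega)

theorem mem_chainLengths_symm [Std.Symm R] (h : n ∈ chainLengths t R A B) :
    n ∈ chainLengths t R B A := by
  obtain ⟨f, hf0, hfn, hfv, hfR⟩ := h
  refine ⟨fun i => f (n - i), by simpa, by simpa, fun i _ => hfv _ (Nat.sub_le _ _),
    fun i hi => ?_⟩
  have h := symm (hfR (n - (i + 1)) (by omega))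
  rwa [show n - (i + 1) + 1 = n - i by omega] at h

theorem streamChainDist_comm [Std.Symm R] (A B : GraphStream) :
    streamChainDist t R A B = streamChainDist t R B A := by
  change sInf (chainLengths t R A B) = sInf (chainLengths t R B A)
  congr 1
  ext n
  exact ⟨mem_chainLengths_symm, mem_chainLengths_symm⟩

end Chains

instance : Std.Symm nodeNeighborStream := ⟨fun _ _ h => h.symm⟩

theorem card_mem_chainLengths_removeNodes {t : ℕ} {C : GraphStream} (hC : C.Valid t)
    {W : Finset ℕ} (hW : ∀ w ∈ W, C.hasNode w) :
    W.card ∈ chainLengths t nodeNeighborStream C (C.removeNodes W) := by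
  induction W using Finset.induction_on with
  | empty => simpa [GraphStream.removeNodes_empty] using zero_mem_chainLengths hC
  | insert a W haW ih =>
    rw [card_insert_of_notMem haW, GraphStream.removeNodes_insert]
    refine add_mem_chainLengths (ih fun w hw => hW w (mem_insert_of_mem hw)) <|
      one_mem_chainLengths (hC.removeNodes W) ((hC.removeNodes W).removeNode a)
        (Or.inl ⟨a, ?_, rfl⟩)
    obtain ⟨s, hs⟩ := hW a (mem_insert_self a W)
    exact ⟨s, mem_sdiff.2 ⟨hs, haW⟩⟩

theorem streamNodeDist_le_of_removeNodes_eq {t : ℕ} {A B : GraphStream} (hA : A.Valid t)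
    (hB : B.Valid t) {W W' : Finset ℕ} (hW : ∀ w ∈ W, A.hasNode w)
    (hW' : ∀ w ∈ W', B.hasNode w) (h : A.removeNodes W = B.removeNodes W') :
    streamNodeDist t A B ≤ W.card + W'.card :=
  streamChainDist_le_of_mem <| add_mem_chainLengths
    (h ▸ card_mem_chainLengths_removeNodes hA hW)
    (mem_chainLengths_symm (card_mem_chainLengths_removeNodes hB hW'))

theorem trunc_projDLL_removeNodes_eq {S : GraphStream} {T D t v : ℕ} (hS : S.Valid T)
    (htT : t ≤ T) {W : Finset ℕ}
    (hW : ∀ u ∈ (S.flat t).verts, u ∉ W → u ≠ v ∧ (S.flat t).degree u ≤ D) :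
    ((projDLL D T S).trunc t).removeNodes W =
      ((projDLL D T (S.removeNode v)).trunc t).removeNodes (W.erase v) := by
  have hends : ∀ s ≤ t, ∀ e ∈ S.edges s, ∀ u ∈ e, u ∉ W → u ≠ v ∧ (S.flat t).degree u ≤ D :=
    fun s hst e he u hu => hW u (hS.mem_flat_verts_of_mem_edges hst he hu)
  ext s x
  · simp only [GraphStream.removeNodes, GraphStream.trunc, projDLL, project,
      GraphStream.removeNode, mem_sdiff, mem_erase]
    split_ifs with hst
    · have := fun hx => hW x (GraphStream.mem_flat_verts.2 ⟨s, hst, hx⟩)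
      rw [mem_erase]
      tauto
    · simp
  · simp only [GraphStream.removeNodes, GraphStream.trunc, mem_filter, mem_erase]
    split_ifs with hst
    · constructor
      · rintro ⟨hx, hxW⟩
        have hxS := GraphStream.project_edges_subset hx
        have hv : v ∉ x := fun hvx =>
          (hends s hst x hxS v hvx fun hvW => hxW v hvW hvx).1 rfl
        refine ⟨mem_projDLL_edges_of_degree_le (hS.removeNode v) hst htT
          (mem_filter.2 ⟨hxS, hv⟩) fun u hu => ?_, fun w hw => hxW w hw.2⟩
        rw [GraphStream.flat_removeNode]
        exact (FinGraph.degree_removeNode_le _ v u).trans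
          (hends s hst x hxS u hu fun h => hxW u h hu).2
      · rintro ⟨hx, hxW⟩
        obtain ⟨hxS, hv⟩ := mem_filter.1 (GraphStream.project_edges_subset hx)
        have hxW' : ∀ w ∈ W, w ∉ x := fun w hw hwx => hxW w ⟨fun h => hv (h ▸ hwx), hw⟩ hwx
        exact ⟨mem_projDLL_edges_of_degree_le hS hst htT hxS fun u hu =>
          (hends s hst x hxS u hu fun h => hxW' u h hu).2, hxW'⟩
    · simp

theorem streamNodeDist_trunc_projDLL_removeNode_le {S : GraphStream} {T D ℓ t : ℕ}
    (hS : S.Valid T) (htT : t ≤ T) (hb : S.DLBoundedThrough D ℓ t) (v : ℕ) :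
    streamNodeDist t ((projDLL D T S).trunc t) ((projDLL D T (S.removeNode v)).trunc t) ≤
      2 * ℓ + 1 := by
  set G := S.flat t
  set W := G.verts.filter fun u => u = v ∨ D < G.degree u
  have hW' : (W.erase v).card ≤ ℓ := by
    refine (card_le_card fun u hu => ?_).trans hb
    simp only [W, mem_erase, mem_filter] at hu
    exact mem_filter.2 ⟨hu.2.1, hu.2.2.resolve_left hu.1⟩
  have hW : W.card ≤ ℓ + 1 :=
    (card_le_card (insert_erase_subset v W)).trans ((card_insert_le _ _).trans (by omega))
  have hkey := trunc_projDLL_removeNodes_eq (v := v) (W := W) hS htT fun u hu huW => by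
    simp only [W, mem_filter, not_and, not_or, not_lt] at huW
    exact huW hu
  have hW'verts : ∀ w ∈ W.erase v, w ∈ ((S.removeNode v).flat t).verts := fun w hw => by
    rw [GraphStream.flat_removeNode]
    exact mem_erase.2 ⟨(mem_erase.1 hw).1, (mem_filter.1 (mem_erase.1 hw).2).1⟩
  calc _ ≤ W.card + (W.erase v).card :=
        streamNodeDist_le_of_removeNodes_eq ((hS.project false D).trunc t)
          (((hS.removeNode v).project false D).trunc t)
          (fun w hw => GraphStream.hasNode_trunc_project.2 (mem_filter.1 hw).1)
          (fun w hw => GraphStream.hasNode_trunc_project.2 (hW'verts w hw)) hkey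
    _ ≤ 2 * ℓ + 1 := by omega

theorem dll_node_to_node_stability_general (T D ℓ : ℕ) (S S' : GraphStream)
    (hS : S.Valid T) (hS' : S'.Valid T) (hnb : nodeNeighborStream S S')
    (t : ℕ) (htT : t ≤ T)
    (hbS : S.DLBoundedThrough D ℓ t) (hbS' : S'.DLBoundedThrough D ℓ t) :
    streamNodeDist t ((projDLL D T S).trunc t) ((projDLL D T S').trunc t) ≤ 2 * ℓ + 1 := by
  rcases hnb with ⟨v, -, rfl⟩ | ⟨v, -, rfl⟩
  · exact streamNodeDist_trunc_projDLL_removeNode_le hS htT hbS v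
  · rw [streamNodeDist, streamChainDist_comm]
    exact streamNodeDist_trunc_projDLL_removeNode_le hS' htT hbS' v

/-- node-to-node stability of the DLL projection.
For every pair of node-neighboring insertion-only graph streams `S, S'` of length `T`
and every time step `t ∈ [T]` such that both streams are `(D, ℓ)`-bounded through
time `t`, the node distance between the DLL-projected streams through time `t` is at
most `2ℓ + 1`. -/
theorem dll_node_to_node_stability (T D ℓ : ℕ) (S S' : GraphStream)
    (hS : S.Valid T) (hS' : S'.Valid T) (hnb : nodeNeighborStream S S')
    (t : ℕ) (ht1 : 1 ≤ t) (htT : t ≤ T)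
    (hbS : S.DLBoundedThrough D ℓ t) (hbS' : S'.DLBoundedThrough D ℓ t) :
    streamNodeDist t ((projDLL D T S).trunc t) ((projDLL D T S').trunc t) ≤ 2 * ℓ + 1 :=
  dll_node_to_node_stability_general T D ℓ S S' hS hS' hnb t htT hbS hbS'
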